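/- arXiv:math/0111064 — 5 statements merged into one kernel-verified Lean document; each statement's English description precedes it below -/
import Mathlib

section
/- Let α_1, …, α_d be a basis of a d-dimensional real inner product space such that ⟨α_i, α_j⟩ ≤ 0 for all i ≠ j, and let α_1^∨, …, α_d^∨ be the dual basis, characterized by ⟨α_i, α_j^∨⟩ = δ_{ij}. Then ⟨α_i^∨, α_j^∨⟩ ≥ 0 for all i ≠ j. -/
open scoped RealInnerProductSpace

/-
The dual-basis vector `α^∨_j` pairs nonnegatively with every `α_k`, so it suffices to show that
in an obtuse basis every vector `v` with `⟪α_k, v⟫ ≥ 0` for all `k` has nonnegative coordinates;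
these coordinates are exactly `⟪α^∨_k, v⟫`. Split `v = p - w` into the parts with positive and
negative coordinates. Since `p` and `w` are nonnegative combinations of disjoint sets of basis
vectors, `⟪p, w⟫ ≤ 0`, while `⟪v, w⟫ ≥ 0`; hence `‖w‖² = ⟪p, w⟫ - ⟪v, w⟫ ≤ 0` and `w = 0`.
-/

section Obtuse

variable {E : Type*} [NormedAddCommGroup E] [InnerProductSpace ℝ E]
  {ι : Type*}

lemma Module.Basis.repr_eq_inner_of_inner_eq_ite (α : Module.Basis ι ℝ E) {αd : ι → E}
    [DecidableEq ι] (hdual : ∀ i j, ⟪α i, αd j⟫ = if i = j then 1 else 0) (v : E) (k : ι) :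
    α.repr v k = ⟪αd k, v⟫ := by
  have : Finsupp.lapply k ∘ₗ α.repr.toLinearMap = innerₛₗ ℝ (αd k) :=
    α.ext fun i => by
      simp only [LinearMap.coe_comp, LinearEquiv.coe_coe, Function.comp_apply,
        Module.Basis.repr_self, Finsupp.lapply_apply, Finsupp.single_apply, innerₛₗ_apply_apply]
      rw [real_inner_comm, hdual]
  exact LinearMap.congr_fun this v

variable [Fintype ι] {α : ι → E}

lemma inner_sum_smul_nonpos_of_pairwise_inner_nonpos
    (hobtuse : ∀ i j, i ≠ j → ⟪α i, α j⟫ ≤ 0) {a b : ι → ℝ}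
    (ha : 0 ≤ a) (hb : 0 ≤ b) (hab : ∀ k, a k * b k = 0) :
    ⟪∑ k, a k • α k, ∑ l, b l • α l⟫ ≤ 0 := by
  simp only [sum_inner, inner_sum]
  refine Finset.sum_nonpos fun l _ => Finset.sum_nonpos fun k _ => ?_
  rw [real_inner_smul_left, real_inner_smul_right]
  obtain rfl | hkl := eq_or_ne k l
  · rw [← mul_assoc, hab, zero_mul]
  · exact mul_nonpos_of_nonneg_of_nonpos (ha k)
      (mul_nonpos_of_nonneg_of_nonpos (hb l) (hobtuse k l hkl))

lemma Module.Basis.repr_nonneg_of_inner_nonneg (α : Module.Basis ι ℝ E)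
    (hobtuse : ∀ i j, i ≠ j → ⟪α i, α j⟫ ≤ 0) {v : E} (hv : ∀ k, 0 ≤ ⟪α k, v⟫) (k : ι) :
    0 ≤ α.repr v k := by
  set c := α.repr v
  set p := ∑ l, (c l)⁺ • α l
  set w := ∑ l, (c l)⁻ • α l
  have hvpw : v = p - w := by
    rw [← Finset.sum_sub_distrib, ← α.sum_repr v]
    simp only [← sub_smul, posPart_sub_negPart, c, α.sum_repr]
  have hpw : ⟪p, w⟫ ≤ 0 := by
    refine inner_sum_smul_nonpos_of_pairwise_inner_nonpos hobtuse
      (fun _ => posPart_nonneg _) (fun _ => negPart_nonneg _) fun l => ?_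
    rcases le_total 0 (c l) with h | h
    · simp [negPart_eq_zero.mpr h]
    · simp [posPart_eq_zero.mpr h]
  have hvw : 0 ≤ ⟪v, w⟫ := by
    refine (inner_sum _ _ _).trans_ge (Finset.sum_nonneg fun l _ => ?_)
    rw [real_inner_smul_right, real_inner_comm]
    exact mul_nonneg (negPart_nonneg _) (hv l)
  have hw : w = 0 := by
    refine real_inner_self_nonpos.mp ?_
    calc ⟪w, w⟫ = ⟪p, w⟫ - ⟪v, w⟫ := by rw [hvpw, inner_sub_left, sub_sub_cancel]
      _ ≤ 0 := by linarith
  have hneg : (c k)⁻ = 0 :=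
    Fintype.linearIndependent_iff.mp α.linearIndependent (fun l => (c l)⁻) hw k
  exact negPart_eq_zero.mp hneg

end Obtuse

theorem dual_basis_pairwise_nonneg_general
    {E : Type*} [NormedAddCommGroup E] [InnerProductSpace ℝ E]
    {d : ℕ}
    (α : Module.Basis (Fin d) ℝ E) (αd : Fin d → E)
    (hdual : ∀ i j, ⟪α i, αd j⟫ = if i = j then 1 else 0)
    (hobtuse : ∀ i j, i ≠ j → ⟪α i, α j⟫ ≤ 0) :
    ∀ i j, i ≠ j → 0 ≤ ⟪αd i, αd j⟫ := by
  intro i j _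
  have hαd : ∀ k, 0 ≤ ⟪α k, αd j⟫ := fun k => by rw [hdual]; split_ifs <;> norm_num
  rw [← α.repr_eq_inner_of_inner_eq_ite hdual]
  exact α.repr_nonneg_of_inner_nonneg hobtuse hαd i

/-- If `α₁, …, α_d` is a basis of a `d`-dimensional real inner product space with
`⟪α i, α j⟫ ≤ 0` for all `i ≠ j`, then the dual basis (characterized by
`⟪α i, αd j⟫ = δᵢⱼ`) satisfies `⟪αd i, αd j⟫ ≥ 0` for all `i ≠ j`. -/
theorem dual_basis_pairwise_nonneg
    {E : Type*} [NormedAddCommGroup E] [InnerProductSpace ℝ E]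
    {d : ℕ} (hdim : Module.finrank ℝ E = d)
    (α : Module.Basis (Fin d) ℝ E) (αd : Fin d → E)
    (hdual : ∀ i j, ⟪α i, αd j⟫ = if i = j then 1 else 0)
    (hobtuse : ∀ i j, i ≠ j → ⟪α i, α j⟫ ≤ 0) :
    ∀ i j, i ≠ j → 0 ≤ ⟪αd i, αd j⟫ :=
  dual_basis_pairwise_nonneg_general α αd hdual hobtuse
end

section
/- Let α_1, …, α_d be a basis of a d-dimensional real inner product space such that ⟨α_i, α_j⟩ ≤ 0 for all i ≠ j, and let α_1^∨, …, α_d^∨ be the dual basis, characterized by ⟨α_i, α_j^∨⟩ = δ_{ij}. Define the obtuseness graph on vertex set {1, 2, …, d} with an edge {i, j} whenever ⟨α_i, α_j⟩ < 0. If this graph is connected, then ⟨α_i^∨, α_j^∨⟩ > 0 for all i ≠ j. -/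
/-!
A vector `x` with `⟪α i, x⟫ ≥ 0` for all `i` has nonnegative coordinates in an obtuse basis
`α`: if `x = p - n` with `p, n` nonnegative combinations of `α` on disjoint supports, then
`⟪n, n⟫ = ⟪p, n⟫ - ⟪x, n⟫ ≤ 0`. Expanding `0 ≤ ⟪α m, x⟫ = ∑ₖ cₖ ⟪α m, α k⟫` at a vanishing
coordinate `cₘ = 0` shows that the zero coordinates of `x` are closed under the obtuseness
graph, so for a connected graph every coordinate of a nonzero such `x` is positive. Since
`⟪α i, αd j⟫ = δᵢⱼ`, the vector `αd j` is such an `x`, and its coordinates are `⟪αd i, αd j⟫`.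
-/

open scoped RealInnerProductSpace

theorem SimpleGraph.Reachable.of_forall_adj {V : Type*} {G : SimpleGraph V} {p : V → Prop}
    (hp : ∀ u v, G.Adj u v → p u → p v) {u v : V} (huv : G.Reachable u v) (hu : p u) : p v := by
  rw [SimpleGraph.reachable_eq_reflTransGen] at huv
  induction huv with
  | refl => exact hu
  | tail _ hadj ih => exact hp _ _ hadj ih

section ObtuseFamily

variable {ι E : Type*} [NormedAddCommGroup E] [InnerProductSpace ℝ E]

def obtusenessGraph (v : ι → E) : SimpleGraph ι :=
  SimpleGraph.fromRel fun i j => ⟪v i, v j⟫ < 0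

theorem obtusenessGraph_adj {v : ι → E} {i j : ι} :
    (obtusenessGraph v).Adj i j ↔ ⟪v i, v j⟫ < 0 := by
  rw [obtusenessGraph, SimpleGraph.fromRel_adj, real_inner_comm (v j), or_self]
  refine ⟨And.right, fun h => ⟨?_, h⟩⟩
  rintro rfl
  exact h.not_ge real_inner_self_nonneg

theorem inner_sum_smul_nonpos_of_mul_eq_zero [Fintype ι] {v : ι → E}
    (hv : ∀ i j, i ≠ j → ⟪v i, v j⟫ ≤ 0) {p n : ι → ℝ} (hp : ∀ k, 0 ≤ p k) (hn : ∀ k, 0 ≤ n k)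
    (hpn : ∀ k, p k * n k = 0) :
    ⟪∑ k, p k • v k, ∑ l, n l • v l⟫ ≤ 0 := by
  simp only [sum_inner, inner_sum, real_inner_smul_left, real_inner_smul_right]
  refine Finset.sum_nonpos fun l _ => Finset.sum_nonpos fun k _ => ?_
  rcases eq_or_ne k l with rfl | hkl
  · rw [← mul_assoc, mul_comm (n k), hpn, zero_mul]
  · exact mul_nonpos_of_nonneg_of_nonpos (hn l)
      (mul_nonpos_of_nonneg_of_nonpos (hp k) (hv k l hkl))

end ObtuseFamily

namespace Module.Basis

variable {ι E : Type*} [Fintype ι] [NormedAddCommGroup E] [InnerProductSpace ℝ E]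
  (α : Basis ι ℝ E)

theorem inner_eq_sum_repr (m : ι) (x : E) : ⟪α m, x⟫ = ∑ k, α.repr x k * ⟪α m, α k⟫ := by
  conv_lhs => rw [← α.sum_repr x]
  simp only [inner_sum, real_inner_smul_right]

theorem inner_eq_repr_of_inner_eq_ite [DecidableEq ι] {αd : ι → E}
    (hdual : ∀ i j, ⟪α i, αd j⟫ = if i = j then 1 else 0) (k : ι) (x : E) :
    ⟪αd k, x⟫ = α.repr x k := by
  have hdual' : ∀ l, ⟪αd k, α l⟫ = if l = k then 1 else 0 := fun l => by
    rw [real_inner_comm, hdual]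
  conv_lhs => rw [← α.sum_repr x]
  simp only [inner_sum, real_inner_smul_right, hdual', mul_ite, mul_one, mul_zero,
    Finset.sum_ite_eq', Finset.mem_univ, if_true]

variable {α} (hobtuse : ∀ i j, i ≠ j → ⟪α i, α j⟫ ≤ 0) {x : E} (hx : ∀ i, 0 ≤ ⟪α i, x⟫)
include hobtuse hx

theorem repr_nonneg_of_forall_inner_nonneg (k : ι) : 0 ≤ α.repr x k := by
  set c := α.repr x
  have hpn_coord : ∀ l, (c l)⁺ * (c l)⁻ = 0 := fun l =>
    (le_total 0 (c l)).elim (fun h => by rw [negPart_eq_zero.2 h, mul_zero])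
      fun h => by rw [posPart_eq_zero.2 h, zero_mul]
  set n : E := ∑ l, (c l)⁻ • α l
  have hx_eq : x = ∑ l, (c l)⁺ • α l - n := by
    conv_lhs => rw [← α.sum_repr x]
    simp only [n, c, ← Finset.sum_sub_distrib, ← sub_smul, posPart_sub_negPart]
  have hpn : ⟪∑ l, (c l)⁺ • α l, n⟫ ≤ 0 :=
    inner_sum_smul_nonpos_of_mul_eq_zero hobtuse (fun l => posPart_nonneg _)
      (fun l => negPart_nonneg _) hpn_coord
  have hxn : 0 ≤ ⟪x, n⟫ := by
    rw [real_inner_comm]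
    simp only [n, sum_inner, real_inner_smul_left]
    exact Finset.sum_nonneg fun l _ => mul_nonneg (negPart_nonneg _) (hx l)
  have hn : n = 0 := by
    rw [← real_inner_self_nonpos]
    have : ⟪n, n⟫ = ⟪∑ l, (c l)⁺ • α l, n⟫ - ⟪x, n⟫ := by
      rw [hx_eq, inner_sub_left, sub_sub_cancel]
    linarith
  have hck : (c k)⁻ = 0 :=
    Fintype.linearIndependent_iff.mp α.linearIndependent (fun l => (c l)⁻) hn k
  exact negPart_eq_zero.mp hck

theorem repr_eq_zero_of_inner_neg {m l : ι} (hm : α.repr x m = 0) (hml : ⟪α m, α l⟫ < 0) :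
    α.repr x l = 0 := by
  have hterms : ∀ k ∈ Finset.univ, α.repr x k * ⟪α m, α k⟫ ≤ 0 := by
    intro k _
    rcases eq_or_ne m k with rfl | hmk
    · rw [hm, zero_mul]
    · exact mul_nonpos_of_nonneg_of_nonpos
        (repr_nonneg_of_forall_inner_nonneg hobtuse hx k) (hobtuse m k hmk)
  have hsum : ∑ k, α.repr x k * ⟪α m, α k⟫ = 0 :=
    le_antisymm (Finset.sum_nonpos hterms) (α.inner_eq_sum_repr m x ▸ hx m)
  have hl := (Finset.sum_eq_zero_iff_of_nonpos hterms).mp hsum l (Finset.mem_univ l)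
  exact (mul_eq_zero.mp hl).resolve_right hml.ne

theorem repr_pos_of_forall_inner_nonneg (hconn : (obtusenessGraph α).Connected) (hx0 : x ≠ 0)
    (k : ι) : 0 < α.repr x k := by
  refine (repr_nonneg_of_forall_inner_nonneg hobtuse hx k).lt_of_ne' fun hk => hx0 ?_
  have hzero : ∀ l, α.repr x l = 0 := fun l =>
    (hconn.preconnected k l).of_forall_adj
      (fun _ _ hadj hu => repr_eq_zero_of_inner_neg hobtuse hx hu (obtusenessGraph_adj.mp hadj)) hk
  rw [← α.repr.map_eq_zero_iff]
  exact Finsupp.ext hzero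

end Module.Basis

theorem dual_basis_pairwise_pos_of_connected_general
    {E : Type*} [NormedAddCommGroup E] [InnerProductSpace ℝ E]
    {d : ℕ}
    (α : Module.Basis (Fin d) ℝ E) (αd : Fin d → E)
    (hdual : ∀ i j, ⟪α i, αd j⟫ = if i = j then 1 else 0)
    (hobtuse : ∀ i j, i ≠ j → ⟪α i, α j⟫ ≤ 0)
    (hconn : (SimpleGraph.fromRel fun i j : Fin d => ⟪α i, α j⟫ < 0).Connected) :
    ∀ i j, i ≠ j → 0 < ⟪αd i, αd j⟫ := by
  intro i j _
  have hx : ∀ k, 0 ≤ ⟪α k, αd j⟫ := fun k => by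
    rw [hdual]
    split_ifs <;> norm_num
  have hx0 : αd j ≠ 0 := by
    intro h
    simpa [h] using hdual j j
  rw [α.inner_eq_repr_of_inner_eq_ite hdual]
  exact α.repr_pos_of_forall_inner_nonneg hobtuse hx hconn hx0 i

/-- If `α₁, …, α_d` is a basis of a `d`-dimensional real inner product space with
`⟪α i, α j⟫ ≤ 0` for all `i ≠ j`, whose "obtuseness graph" (an edge `{i,j}` whenever
`⟪α i, α j⟫ < 0`) is connected, then the dual basis satisfies `⟪αd i, αd j⟫ > 0`
for all `i ≠ j`. -/
theorem dual_basis_pairwise_pos_of_connected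
    {E : Type*} [NormedAddCommGroup E] [InnerProductSpace ℝ E]
    {d : ℕ} (hdim : Module.finrank ℝ E = d)
    (α : Module.Basis (Fin d) ℝ E) (αd : Fin d → E)
    (hdual : ∀ i j, ⟪α i, αd j⟫ = if i = j then 1 else 0)
    (hobtuse : ∀ i j, i ≠ j → ⟪α i, α j⟫ ≤ 0)
    (hconn : (SimpleGraph.fromRel fun i j : Fin d => ⟪α i, α j⟫ < 0).Connected) :
    ∀ i j, i ≠ j → 0 < ⟪αd i, αd j⟫ :=
  dual_basis_pairwise_pos_of_connected_general α αd hdual hobtuse hconn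
end

section
/- For every odd integer n ≥ 3, the alternating binomial sum ∑_{i=0}^{n−3} (−1)^i · C(n−3, i) · C(n−1, i+1) equals (−1)^{(n−3)/2} · (n−1) · catalan((n−3)/2), where C(a, b) denotes the binomial coefficient and catalan(m) = (1/(m+1)) · C(2m, m) is the m-th Catalan number. Equivalently, the signature of the (n−3)-dimensional associahedron, σ(𝒜_n) = (1/(n−1)) ∑_{i=0}^{n−3} (−1)^i C(n−3, i) C(n−1, i+1), equals (−1)^{(n−3)/2} times the Catalan number (1/k) C(2k−2, k−1) with k = (n−1)/2. -/
/-!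
With `a = n - 3`, the sum is the coefficient of `X ^ (a + 1)` in
`(1 - X) ^ a * (1 + X) ^ (a + 2) = (1 - X ^ 2) ^ a * (1 + X) ^ 2`. For `a = 2 m` the polynomial
`(1 - X ^ 2) ^ a` has only even-degree terms, so only the middle term `2 X` of `(1 + X) ^ 2`
contributes, giving `2 (-1) ^ m C(2m, m) = (-1) ^ m (n - 1) catalan m`.
-/

open Finset Polynomial

section
variable {R : Type*} [CommRing R]

theorem coeff_one_sub_X_pow (a k : ℕ) :
    (((1 : R[X]) - X) ^ a).coeff k = (-1) ^ k * (a.choose k : R) := by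
  have h : ((1 : R[X]) - X) ^ a = ((1 + X) ^ a).comp (C (-1) * X) := by
    simp [sub_eq_add_neg]
  rw [h, comp_C_mul_X_coeff, coeff_one_add_X_pow, mul_comm]

theorem coeff_one_sub_X_sq_pow (a k : ℕ) :
    (((1 : R[X]) - X ^ 2) ^ a).coeff k =
      if 2 ∣ k then (-1) ^ (k / 2) * (a.choose (k / 2) : R) else 0 := by
  have h : ((1 : R[X]) - X ^ 2) ^ a = expand R 2 ((1 - X) ^ a) := by simp
  rw [h, coeff_expand two_pos, coeff_one_sub_X_pow]

theorem coeff_one_sub_X_sq_pow_of_odd (a : ℕ) {k : ℕ} (hk : Odd k) :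
    (((1 : R[X]) - X ^ 2) ^ a).coeff k = 0 := by
  rw [coeff_one_sub_X_sq_pow, if_neg (Nat.not_even_iff_odd.2 hk ∘ even_iff_two_dvd.2)]

theorem sum_range_neg_one_pow_mul_choose_mul_choose_succ (a : ℕ) :
    ∑ i ∈ range (a + 1), (-1 : R) ^ i * (a.choose i : R) * ((a + 2).choose (i + 1) : R) =
      (((1 : R[X]) - X) ^ a * (1 + X) ^ (a + 2)).coeff (a + 1) := by
  rw [coeff_mul, Nat.sum_antidiagonal_eq_sum_range_succ_mk, sum_range_succ _ (a + 1),
    coeff_one_sub_X_pow, Nat.choose_eq_zero_of_lt (Nat.lt_succ_self a), Nat.cast_zero, mul_zero,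
    zero_mul, add_zero]
  refine sum_congr rfl fun i hi => ?_
  rw [mem_range] at hi
  rw [coeff_one_sub_X_pow, coeff_one_add_X_pow, ← Nat.choose_symm (by omega : i + 1 ≤ a + 2),
    show a + 2 - (i + 1) = a + 1 - i by omega]

theorem sum_range_neg_one_pow_mul_choose_mul_choose_two_mul (m : ℕ) :
    ∑ i ∈ range (2 * m + 1),
        (-1 : R) ^ i * ((2 * m).choose i : R) * ((2 * m + 2).choose (i + 1) : R) =
      2 * (-1) ^ m * ((2 * m).choose m : R) := by
  have hfactor : ((1 : R[X]) - X) ^ (2 * m) * (1 + X) ^ (2 * m + 2) =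
      (1 - X ^ 2) ^ (2 * m) * (1 + 2 * X + X ^ 2) := by
    rw [pow_add, ← mul_assoc, ← mul_pow]; ring
  have hmiddle : (((1 : R[X]) - X ^ 2) ^ (2 * m)).coeff (2 * m) =
      (-1) ^ m * ((2 * m).choose m : R) := by
    rw [coeff_one_sub_X_sq_pow, if_pos (dvd_mul_right 2 m), Nat.mul_div_cancel_left m two_pos]
  have hlast : (((1 : R[X]) - X ^ 2) ^ (2 * m) * X ^ 2).coeff (2 * m + 1) = 0 := by
    rw [coeff_mul_X_pow']
    split_ifs
    · exact coeff_one_sub_X_sq_pow_of_odd _ ⟨m - 1, by omega⟩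
    · rfl
  rw [sum_range_neg_one_pow_mul_choose_mul_choose_succ, hfactor, mul_add, mul_add, coeff_add,
    coeff_add, mul_one, ← mul_assoc, mul_comm _ (2 : R[X]), mul_assoc, coeff_ofNat_mul,
    coeff_mul_X, coeff_one_sub_X_sq_pow_of_odd _ (odd_two_mul_add_one m), hmiddle, hlast]
  ring
end

theorem choose_two_mul_eq_succ_mul_catalan (m : ℕ) : (2 * m).choose m = (m + 1) * catalan m := by
  rw [succ_mul_catalan_eq_centralBinom, Nat.centralBinom_eq_two_mul_choose]

/-- For odd `n ≥ 3`, the alternating binomial sum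
`∑_{i=0}^{n-3} (-1)^i C(n-3, i) C(n-1, i+1)` equals
`(-1)^((n-3)/2) (n-1) catalan((n-3)/2)`.  Equivalently, the signature of the
associahedron, `σ(𝒜_n) = (1/(n-1)) ∑_{i=0}^{n-3} (-1)^i C(n-3, i) C(n-1, i+1)`,
equals `(-1)^((n-3)/2)` times the Catalan number `(1/k) C(2k-2, k-1)` with `k = (n-1)/2`. -/
theorem associahedron_signature_odd (n : ℕ) (hn : 3 ≤ n) (hodd : Odd n) :
    (∑ i ∈ Finset.range (n - 2),
        (-1 : ℤ) ^ i * ((n - 3).choose i : ℤ) * ((n - 1).choose (i + 1) : ℤ)) =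
      (-1 : ℤ) ^ ((n - 3) / 2) * ((n : ℤ) - 1) * (catalan ((n - 3) / 2) : ℤ) ∧
    ((1 : ℚ) / ((n : ℚ) - 1)) *
        (∑ i ∈ Finset.range (n - 2),
          (-1 : ℚ) ^ i * ((n - 3).choose i : ℚ) * ((n - 1).choose (i + 1) : ℚ)) =
      (-1 : ℚ) ^ ((n - 3) / 2) * ((1 : ℚ) / (((n - 1) / 2 : ℕ) : ℚ)) *
        ((2 * ((n - 1) / 2) - 2).choose ((n - 1) / 2 - 1) : ℚ) := by
  obtain ⟨m, rfl⟩ : ∃ m, n = 2 * m + 3 := by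
    obtain ⟨k, rfl⟩ := hodd
    exact ⟨k - 1, by omega⟩
  simp only [show 2 * m + 3 - 2 = 2 * m + 1 by omega, show 2 * m + 3 - 3 = 2 * m by omega,
    show 2 * m + 3 - 1 = 2 * m + 2 by omega, show (2 * m + 2) / 2 = m + 1 by omega,
    show 2 * m / 2 = m by omega, show 2 * (m + 1) - 2 = 2 * m by omega, Nat.add_sub_cancel,
    sum_range_neg_one_pow_mul_choose_mul_choose_two_mul]
  constructor
  · rw [choose_two_mul_eq_succ_mul_catalan]
    push_cast
    ring
  · have hden : ((2 * m + 3 : ℕ) : ℚ) - 1 = 2 * ((m + 1 : ℕ) : ℚ) := by push_cast; ring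
    rw [hden]
    field_simp
end

section
/- For a permutation w of {1, …, n}, let des(w) = #{i : 1 ≤ i ≤ n−1 and w(i) > w(i+1)} be its number of descents. Then, as formal power series over ℚ, one has the exponential generating function identity ∑_{n≥1} (∑_{w ∈ S_n} (−1)^{des(w)}) x^n/n! = tanh(x); equivalently, letting A ∈ ℚ[[x]] be the power series whose n-th coefficient is (∑_{w ∈ S_n} (−1)^{des(w)})/n! for n ≥ 1 and 0 for n = 0, letting C = ∑_{k≥0} x^{2k}/(2k)! and S = ∑_{k≥0} x^{2k+1}/(2k+1)!, one has A · C = S. -/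
/-- The number of descents of a permutation `w` of `Fin n` (positions `i` with
`w i > w (i+1)`). -/
noncomputable def descNum (n : ℕ) (w : Equiv.Perm (Fin n)) : ℕ :=
  Nat.card {i : Fin n // ∃ h : (i : ℕ) + 1 < n, w ⟨(i : ℕ) + 1, h⟩ < w i}

/-- `∑_{w ∈ S_n} (-1)^{des(w)}`, the signature of the type `A_{n-1}` Coxeter zonotope. -/
noncomputable def signedDescentSum (n : ℕ) : ℚ :=
  ∑ w : Equiv.Perm (Fin n), (-1 : ℚ) ^ descNum n w

/-! Cutting an arrangement of `n + 1` letters at its largest letter `m` writes it as `u m v`, where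
`u` is an arrangement of an arbitrary subset of the other letters, `v` one of its complement, and
`des (u m v) = des u + des v + [v ≠ []]`. Descents only see the relative order of the letters, so
the signed descent sum over the arrangements of a set is `D k = signedDescentSum k` for a set of
size `k`, and the cut gives `D (n + 1) = 2 D n - ∑ₖ C(n, k) D k D (n - k)`, i.e. `F' = 2F - F²` for the exponential generating
function `F` of `D`, with `F(0) = 1`. So `A = F - 1` solves `A' = 1 - A²`, `A(0) = 0`, and then
`H = A C - S` solves the linear equation `H' = -A H` with `H(0) = 0`, forcing `H = 0`. -/

open Finset

namespace List

variable {α β : Type*} [LinearOrder α] [LinearOrder β]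

def numDescents : List α → ℕ
  | a :: b :: t => (if b < a then 1 else 0) + numDescents (b :: t)
  | _ => 0

@[simp] lemma numDescents_nil : numDescents ([] : List α) = 0 := rfl

@[simp] lemma numDescents_singleton (a : α) : numDescents [a] = 0 := rfl

lemma numDescents_cons_cons (a b : α) (t : List α) :
    numDescents (a :: b :: t) = (if b < a then 1 else 0) + numDescents (b :: t) := rfl

lemma numDescents_append_cons_of_forall_lt {m : α} (l₂ : List α) :
    ∀ {l₁ : List α}, (∀ x ∈ l₁, x < m) →
      numDescents (l₁ ++ m :: l₂) = numDescents l₁ + numDescents (m :: l₂)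
  | [], _ => by simp
  | [a], h => by simp [numDescents_cons_cons, (h a (by simp)).not_gt]
  | a :: b :: t, h => by
    rw [cons_append, cons_append, numDescents_cons_cons, ← cons_append,
      numDescents_append_cons_of_forall_lt l₂ (fun x hx => h x (mem_cons_of_mem a hx)),
      numDescents_cons_cons, add_assoc]

lemma numDescents_cons_of_forall_lt {m : α} :
    ∀ {l : List α}, (∀ x ∈ l, x < m) →
      numDescents (m :: l) = numDescents l + if l = [] then 0 else 1
  | [], _ => rfl
  | b :: t, h => by simp [numDescents_cons_cons, h b (by simp), add_comm]

lemma numDescents_map_of_strictMono {f : α → β} (hf : StrictMono f) :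
    ∀ l : List α, numDescents (l.map f) = numDescents l
  | [] => rfl
  | [_] => rfl
  | a :: b :: t => by
    simp only [map_cons, numDescents_cons_cons, hf.lt_iff_lt]
    rw [← map_cons, numDescents_map_of_strictMono hf]

lemma numDescents_ofFn : ∀ {n : ℕ} (v : Fin n → α),
    numDescents (ofFn v) = #{i : Fin n | ∃ h : (i : ℕ) + 1 < n, v ⟨i + 1, h⟩ < v i}
  | 0, _ => rfl
  | 1, v => by
    rw [ofFn_succ, ofFn_zero, numDescents_singleton, eq_comm, card_eq_zero, filter_eq_empty_iff]
    rintro i - ⟨h, -⟩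
    omega
  | n + 2, v => by
    have ih := numDescents_ofFn fun i : Fin (n + 1) => v i.succ
    rw [ofFn_succ] at ih ⊢
    rw [ofFn_succ, numDescents_cons_cons, ih]
    conv_rhs => rw [Fin.card_filter_univ_succ']
    congr 2
    · simp [Fin.succ]
    · ext i
      simp [Fin.succ]

end List

namespace Finset

variable {α β M : Type*} [AddCommMonoid M]

def arrangements (s : Finset α) : Finset (List α) :=
  ⟨s.val.lists, Multiset.lists_nodup_finset s⟩

lemma mem_arrangements {s : Finset α} {l : List α} :
    l ∈ s.arrangements ↔ (l : Multiset α) = s.val :=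
  (Multiset.mem_lists_iff _ _).trans eq_comm

@[simp] lemma arrangements_empty : (∅ : Finset α).arrangements = {[]} := by
  ext l
  simp [mem_arrangements]

lemma sum_arrangements_map (e : α ↪ β) (s : Finset α) (f : List β → M) :
    ∑ l ∈ (s.map e).arrangements, f l = ∑ l ∈ s.arrangements, f (l.map e) := by
  have h : (s.map e).val.lists = s.val.lists.map (List.map e) := by
    rw [map_val]
    induction s.val using Quotient.inductionOn with
    | h l => simp [List.map_permutations]
  simp only [Finset.sum, arrangements, h, Multiset.map_map, Function.comp_def]

lemma mem_iff_of_mem_arrangements {s : Finset α} {l : List α} (hl : l ∈ s.arrangements) {x : α} :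
    x ∈ l ↔ x ∈ s := by
  rw [← mem_val, ← mem_arrangements.mp hl, Multiset.mem_coe]

variable [DecidableEq α]

lemma sum_arrangements_insert {m : α} {t : Finset α} (hm : m ∉ t) (f : List α → M) :
    ∑ l ∈ (insert m t).arrangements, f l =
      ∑ A ∈ t.powerset, ∑ l₁ ∈ A.arrangements, ∑ l₂ ∈ (t \ A).arrangements, f (l₁ ++ m :: l₂) := by
  rw [eq_comm]
  simp only [← sum_product (f := fun p : List α × List α => f (p.1 ++ m :: p.2))]
  rw [← sum_sigma (f := fun x : (_ : Finset α) × List α × List α => f (x.2.1 ++ m :: x.2.2))]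
  have hcoe (l₁ l₂ : List α) : ((l₁ ++ m :: l₂ : List α) : Multiset α) = m ::ₘ (l₁ + l₂) := by
    rw [← Multiset.coe_add, ← Multiset.cons_coe, Multiset.add_cons]
  refine sum_bij (fun x _ => x.2.1 ++ m :: x.2.2) ?_ ?_ ?_ (fun _ _ => rfl)
  · rintro ⟨A, l₁, l₂⟩ hx
    simp only [mem_sigma, mem_powerset, mem_product, mem_arrangements] at hx ⊢
    obtain ⟨hA, h₁, h₂⟩ := hx
    rw [insert_val_of_notMem hm, hcoe, h₁, h₂, sdiff_val, add_tsub_cancel_of_le (val_le_iff.mpr hA)]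
  · rintro ⟨A, l₁, l₂⟩ hx ⟨A', l₁', l₂'⟩ hx' heq
    simp only [mem_sigma, mem_powerset, mem_product] at hx hx'
    have hm₁ : m ∉ l₁ := fun h => hm (hx.1 ((mem_iff_of_mem_arrangements hx.2.1).mp h))
    have hm₂ : m ∉ l₂ := fun h => hm (sdiff_subset ((mem_iff_of_mem_arrangements hx.2.2).mp h))
    obtain ⟨rfl, -, rfl⟩ := (List.append_cons_inj_of_notMem hm₁ hm₂).mp heq
    obtain rfl : A = A' := val_inj.mp <|
      (mem_arrangements.mp hx.2.1).symm.trans (mem_arrangements.mp hx'.2.1)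
    rfl
  · intro l hl
    obtain ⟨l₁, l₂, rfl⟩ :=
      List.append_of_mem ((mem_iff_of_mem_arrangements hl).mpr (mem_insert_self m t))
    have hsplit : (l₁ + l₂ : Multiset α) = t.val := by
      rw [← Multiset.cons_inj_right m, ← hcoe, mem_arrangements.mp hl, insert_val_of_notMem hm]
    have hle : (l₁ : Multiset α) ≤ t.val := hsplit ▸ Multiset.le_add_right _ _
    let A : Finset α := ⟨l₁, Multiset.nodup_of_le hle t.nodup⟩
    have hl₂ : (l₂ : Multiset α) = (t \ A).val := by rw [sdiff_val, ← hsplit, add_tsub_cancel_left]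
    exact ⟨⟨A, l₁, l₂⟩, mem_sigma.mpr ⟨mem_powerset.mpr (val_le_iff.mp hle),
      mem_product.mpr ⟨mem_arrangements.mpr rfl, mem_arrangements.mpr hl₂⟩⟩, rfl⟩

end Finset

section SignedDescentSumOn

variable {α β : Type*} [LinearOrder α] [LinearOrder β]

def signedDescentSumOn (s : Finset α) : ℚ :=
  ∑ l ∈ s.arrangements, (-1) ^ l.numDescents

lemma signedDescentSumOn_empty : signedDescentSumOn (∅ : Finset α) = 1 := by
  simp [signedDescentSumOn]

lemma signedDescentSumOn_map (e : α ↪o β) (s : Finset α) :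
    signedDescentSumOn (s.map e.toEmbedding) = signedDescentSumOn s := by
  simp only [signedDescentSumOn, sum_arrangements_map, RelEmbedding.coe_toEmbedding,
    List.numDescents_map_of_strictMono e.strictMono]

lemma signedDescentSumOn_univ_fin (n : ℕ) :
    signedDescentSumOn (univ : Finset (Fin n)) = signedDescentSum n := by
  rw [signedDescentSumOn, signedDescentSum, eq_comm]
  refine sum_bij (fun w _ => List.ofFn w) ?_ ?_ ?_ ?_
  · intro w _
    rw [mem_arrangements, Multiset.Nodup.ext _ univ.nodup]
    · simpa using fun x => w.surjective x
    · exact Multiset.coe_nodup.mpr (List.nodup_ofFn.mpr w.injective)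
  · intro w _ w' _ h
    exact Equiv.ext (congrFun (List.ofFn_injective h))
  · intro l hl
    have hmem (x : Fin n) : x ∈ l := (mem_iff_of_mem_arrangements hl).mpr (mem_univ x)
    have hnd : l.Nodup := by simpa [← mem_arrangements.mp hl] using (univ : Finset (Fin n)).nodup
    have hlen : l.length = n := by
      simpa using congrArg Multiset.card (mem_arrangements.mp hl)
    refine ⟨(finCongr hlen).symm.trans (hnd.getEquivOfForallMemList l hmem), mem_univ _, ?_⟩
    conv_rhs => rw [← l.ofFn_get, List.ofFn_congr hlen]
    rfl
  · intro w _
    rw [List.numDescents_ofFn, descNum, Nat.card_eq_fintype_card, Fintype.card_subtype]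

lemma signedDescentSumOn_eq (s : Finset α) : signedDescentSumOn s = signedDescentSum #s := by
  rw [← signedDescentSumOn_univ_fin, ← signedDescentSumOn_map (s.orderEmbOfFin rfl),
    map_orderEmbOfFin_univ]

lemma neg_one_pow_numDescents_append_cons {m : α} {l₁ l₂ : List α} (h₁ : ∀ x ∈ l₁, x < m)
    (h₂ : ∀ x ∈ l₂, x < m) :
    (-1 : ℚ) ^ (l₁ ++ m :: l₂).numDescents =
      (if l₂ = [] then 1 else -1) * ((-1) ^ l₁.numDescents * (-1) ^ l₂.numDescents) := by
  rw [List.numDescents_append_cons_of_forall_lt l₂ h₁, List.numDescents_cons_of_forall_lt h₂]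
  split_ifs <;> ring

lemma signedDescentSumOn_insert_of_forall_lt {m : α} {t : Finset α} (h : ∀ x ∈ t, x < m) :
    signedDescentSumOn (insert m t) =
      2 * signedDescentSumOn t -
        ∑ A ∈ t.powerset, signedDescentSumOn A * signedDescentSumOn (t \ A) := by
  have hsign {A : Finset α} (hA : A ⊆ t) {l₂ : List α} (hl₂ : l₂ ∈ (t \ A).arrangements) :
      (if l₂ = [] then (1 : ℚ) else -1) = 2 * (if A = t then 1 else 0) - 1 := by
    have : l₂ = [] ↔ A = t := by
      rw [← Multiset.coe_eq_zero, mem_arrangements.mp hl₂, val_eq_zero, sdiff_eq_empty_iff_subset,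
        Subset.antisymm_iff, and_iff_right hA]
    rw [if_congr this rfl rfl]
    split_ifs <;> norm_num
  calc signedDescentSumOn (insert m t)
      = ∑ A ∈ t.powerset, (2 * (if A = t then 1 else 0) - 1) *
          (signedDescentSumOn A * signedDescentSumOn (t \ A)) := by
        rw [signedDescentSumOn, sum_arrangements_insert fun hm => (h m hm).false]
        refine sum_congr rfl fun A hA => ?_
        rw [signedDescentSumOn, signedDescentSumOn, sum_mul_sum, mul_sum]
        refine sum_congr rfl fun l₁ hl₁ => ?_
        rw [mul_sum]
        refine sum_congr rfl fun l₂ hl₂ => ?_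
        rw [mem_powerset] at hA
        have h₁ (x) (hx : x ∈ l₁) : x < m := h x (hA ((mem_iff_of_mem_arrangements hl₁).mp hx))
        have h₂ (x) (hx : x ∈ l₂) : x < m :=
          h x (sdiff_subset ((mem_iff_of_mem_arrangements hl₂).mp hx))
        rw [neg_one_pow_numDescents_append_cons h₁ h₂, hsign hA hl₂]
    _ = _ := by
        simp only [sub_mul, one_mul, mul_assoc, ite_mul, zero_mul, sum_sub_distrib, ← mul_sum,
          sum_ite_eq', mem_powerset_self, if_true, sdiff_self, bot_eq_empty,
          signedDescentSumOn_empty, mul_one]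

end SignedDescentSumOn

lemma signedDescentSum_zero : signedDescentSum 0 = 1 := by
  rw [← card_empty (α := ℕ), ← signedDescentSumOn_eq, signedDescentSumOn_empty]

lemma signedDescentSum_succ (n : ℕ) :
    signedDescentSum (n + 1) = 2 * signedDescentSum n -
      ∑ k ∈ range (n + 1), n.choose k * signedDescentSum k * signedDescentSum (n - k) := by
  have hsplit : ∑ A ∈ (range n).powerset, signedDescentSumOn A * signedDescentSumOn (range n \ A) =
      ∑ A ∈ (range n).powerset, signedDescentSum #A * signedDescentSum (n - #A) := by
    refine sum_congr rfl fun A hA => ?_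
    rw [signedDescentSumOn_eq, signedDescentSumOn_eq, card_sdiff_of_subset (mem_powerset.mp hA),
      card_range]
  have key := signedDescentSumOn_insert_of_forall_lt (m := n) (t := range n) fun _ => mem_range.mp
  rw [← range_add_one, hsplit,
    sum_powerset_apply_card fun k => signedDescentSum k * signedDescentSum (n - k)] at key
  simpa only [signedDescentSumOn_eq, card_range, nsmul_eq_mul, mul_assoc] using key

namespace PowerSeries

open scoped Nat

lemma eq_zero_of_derivative_eq_mul {R : Type*} [CommRing R] [IsAddTorsionFree R] {f g : R⟦X⟧}
    (h0 : constantCoeff f = 0) (hd : d⁄dX R f = g * f) : f = 0 := by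
  ext n
  induction n using Nat.strong_induction_on with
  | _ n ih =>
    rcases n with _ | n
    · simpa using h0
    have hn : coeff n (d⁄dX R f) = 0 := by
      rw [hd, coeff_mul]
      exact sum_eq_zero fun p hp => by
        rw [ih p.2 (Nat.antidiagonal.snd_lt hp), map_zero, mul_zero]
    rwa [coeff_derivative, mul_comm, ← Nat.cast_succ, ← nsmul_eq_mul,
      nsmul_eq_zero_iff_right n.succ_ne_zero] at hn

variable {K : Type*} [Field K]

variable (K) in
def coshSeries : K⟦X⟧ := mk fun n => if Even n then 1 / n ! else 0

variable (K) in
def sinhSeries : K⟦X⟧ := mk fun n => if Odd n then 1 / n ! else 0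

def egf (a : ℕ → K) : K⟦X⟧ := mk fun n => a n / n !

lemma coeff_egf (a : ℕ → K) (n : ℕ) : coeff n (egf a) = a n / n ! := coeff_mk _ _

@[simp] lemma constantCoeff_egf (a : ℕ → K) : constantCoeff (egf a) = a 0 := by
  rw [← coeff_zero_eq_constantCoeff_apply, coeff_egf, Nat.factorial_zero, Nat.cast_one, div_one]

lemma coshSeries_eq_egf : coshSeries K = egf fun n => if Even n then 1 else 0 := by
  ext n
  simp only [coshSeries, coeff_mk, coeff_egf, ite_div, zero_div]

lemma sinhSeries_eq_egf : sinhSeries K = egf fun n => if Odd n then 1 else 0 := by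
  ext n
  simp only [sinhSeries, coeff_mk, coeff_egf, ite_div, zero_div]

variable [CharZero K]

lemma derivative_egf (a : ℕ → K) : d⁄dX K (egf a) = egf fun n => a (n + 1) := by
  ext n
  rw [coeff_derivative, coeff_egf, coeff_egf, Nat.factorial_succ, Nat.cast_mul]
  field_simp
  push_cast
  ring

lemma egf_mul (a b : ℕ → K) :
    egf a * egf b = egf fun n => ∑ k ∈ range (n + 1), n.choose k * a k * b (n - k) := by
  ext n
  rw [coeff_mul, Nat.sum_antidiagonal_eq_sum_range_succ_mk, coeff_egf, sum_div]
  refine sum_congr rfl fun k hk => ?_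
  rw [coeff_egf, coeff_egf, Nat.cast_choose K (Nat.le_of_lt_succ (mem_range.mp hk))]
  have : (n ! : K) ≠ 0 := by exact_mod_cast n.factorial_ne_zero
  field_simp

lemma derivative_coshSeries : d⁄dX K (coshSeries K) = sinhSeries K := by
  simp only [coshSeries_eq_egf, sinhSeries_eq_egf, derivative_egf, Nat.even_add_one,
    Nat.not_even_iff_odd]

lemma derivative_sinhSeries : d⁄dX K (sinhSeries K) = coshSeries K := by
  simp only [coshSeries_eq_egf, sinhSeries_eq_egf, derivative_egf, Nat.odd_add_one,
    Nat.not_odd_iff_even]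

lemma mul_coshSeries_eq_sinhSeries {A : K⟦X⟧} (hA : d⁄dX K A = 1 - A ^ 2)
    (h0 : constantCoeff A = 0) : A * coshSeries K = sinhSeries K := by
  rw [← sub_eq_zero]
  refine eq_zero_of_derivative_eq_mul (g := -A) ?_ ?_
  · simp [sinhSeries, h0]
  · rw [map_sub, Derivation.leibniz, hA, derivative_coshSeries, derivative_sinhSeries, smul_eq_mul,
      smul_eq_mul]
    ring

end PowerSeries

open PowerSeries

lemma derivative_egf_signedDescentSum :
    d⁄dX ℚ (egf signedDescentSum) = 2 * egf signedDescentSum - egf signedDescentSum ^ 2 := by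
  rw [derivative_egf, sq, egf_mul, two_mul]
  ext n
  simp only [map_sub, map_add, coeff_egf, signedDescentSum_succ, sub_div, add_div, two_mul]

/-- The exponential generating function identity
`∑_{n ≥ 1} (∑_{w ∈ S_n} (-1)^{des w}) xⁿ/n! = tanh x`:
with `A` the EGF of the signed descent sums, `C = ∑ x^{2k}/(2k)!` and
`S = ∑ x^{2k+1}/(2k+1)!`, one has `A * C = S` in `ℚ⟦x⟧`. -/
theorem signed_descent_egf_eq_tanh :
    (PowerSeries.mk fun n => if n = 0 then (0 : ℚ) else signedDescentSum n / n.factorial) *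
      (PowerSeries.mk fun n => if Even n then (1 : ℚ) / n.factorial else 0) =
    PowerSeries.mk fun n => if Odd n then (1 : ℚ) / n.factorial else 0 := by
  have hA : (PowerSeries.mk fun n => if n = 0 then (0 : ℚ) else signedDescentSum n / n.factorial) =
      egf signedDescentSum - 1 := by
    ext (_ | n) <;> simp [coeff_egf, signedDescentSum_zero]
  rw [hA]
  refine mul_coshSeries_eq_sinhSeries ?_ ?_
  · rw [map_sub, derivative_one, sub_zero, derivative_egf_signedDescentSum]
    ring
  · simp [signedDescentSum_zero]
end

section
/- Let Δ be a complete simplicial fan in ℝ^d that is locally convex. Then Δ is flag when considered as a simplicial complex: whenever ρ_1, …, ρ_k are rays of Δ such that for every pair i ≠ j the cone of nonnegative combinations of ρ_i ∪ ρ_j is a cone of Δ, the cone of nonnegative combinations of ρ_1 ∪ ⋯ ∪ ρ_k is also a cone of Δ. -/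
/-!
Induct on the set `T` of rays. Suppose `T` spans a cone `σ` of `Δ` and `a` is a new ray adjacent
to every ray of `T`. Each `t ∈ T` lies in the star of `a`, which is a convex cone, so the point
`x = ∑ t` lies in some cone `g` containing `a`. Then `x ∈ σ ∩ g`, a face of `σ`, and a face of
a simplicial cone containing a sum of its points contains each summand, so `T ∪ {a} ⊆ g`.
Finally, rays of `Δ` lying in one cone `g` are positive multiples of generators of `g`, so they
span a face of `g`.
-/

open scoped RealInnerProductSpace

/-- The polyhedral cone of all nonnegative linear combinations of a finite set of
vectors in `ℝ^d`. -/
def coneOf {d : ℕ} (s : Finset (EuclideanSpace ℝ (Fin d))) : Set (EuclideanSpace ℝ (Fin d)) :=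
  {x | ∃ c : EuclideanSpace ℝ (Fin d) → ℝ, (∀ v, 0 ≤ c v) ∧ x = ∑ v ∈ s, c v • v}

/-- A complete simplicial fan in `ℝ^d`: a finite collection of simplicial cones, recorded
by their (linearly independent) sets of extremal generators, closed under passing to faces
(subsets of the generators), such that the intersection of any two cones is a face of each,
and whose union is all of `ℝ^d`. -/
structure CompleteSimplicialFan (d : ℕ) where
  cones : Finset (Finset (EuclideanSpace ℝ (Fin d)))
  indep : ∀ s ∈ cones, LinearIndependent ℝ (fun v : s => (v : EuclideanSpace ℝ (Fin d)))
  down_closed : ∀ s ∈ cones, ∀ t ⊆ s, t ∈ cones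
  inter_face : ∀ s ∈ cones, ∀ t ∈ cones,
    (∃ u ⊆ s, coneOf u = coneOf s ∩ coneOf t) ∧ (∃ u ⊆ t, coneOf u = coneOf s ∩ coneOf t)
  complete : (⋃ s ∈ cones, coneOf s) = Set.univ

/-- The star of the ray spanned by `v`: the union of all cones of the fan containing
that ray. -/
def rayStar {d : ℕ} (Δ : CompleteSimplicialFan d) (v : EuclideanSpace ℝ (Fin d)) :
    Set (EuclideanSpace ℝ (Fin d)) :=
  ⋃ s ∈ {s | s ∈ Δ.cones ∧ coneOf {v} ⊆ coneOf s}, coneOf s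

/-- A fan is locally convex if the star of each of its rays is a convex set. -/
def LocallyConvexFan {d : ℕ} (Δ : CompleteSimplicialFan d) : Prop :=
  ∀ v : EuclideanSpace ℝ (Fin d), {v} ∈ Δ.cones → Convex ℝ (rayStar Δ v)

noncomputable instance {d : ℕ} : DecidableEq (EuclideanSpace ℝ (Fin d)) :=
  fun _ _ => Classical.dec _

section

variable {d : ℕ}

local notation "E" => EuclideanSpace ℝ (Fin d)

open Finset

theorem coneOf_eq_hull (s : Finset E) : coneOf s = PointedCone.hull ℝ (s : Set E) := by
  ext x
  rw [SetLike.mem_coe, Submodule.mem_span_finset]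
  constructor
  · rintro ⟨c, hc, rfl⟩
    exact (Submodule.mem_span_finset.mp <| Submodule.sum_mem _ fun v hv =>
      PointedCone.smul_mem _ (hc v) (PointedCone.subset_hull hv))
  · rintro ⟨f, -, rfl⟩
    exact ⟨fun v => f v, fun v => (f v).2, rfl⟩

theorem subset_coneOf (s : Finset E) : (s : Set E) ⊆ coneOf s := by
  rw [coneOf_eq_hull]
  exact PointedCone.subset_hull

theorem smul_mem_coneOf {s : Finset E} {c : ℝ} (hc : 0 ≤ c) {x : E} (hx : x ∈ coneOf s) :
    c • x ∈ coneOf s := by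
  rw [coneOf_eq_hull] at hx ⊢
  exact PointedCone.smul_mem _ hc hx

theorem sum_mem_coneOf {s : Finset E} {ι : Type*} {t : Finset ι} {f : ι → E}
    (hf : ∀ i ∈ t, f i ∈ coneOf s) : ∑ i ∈ t, f i ∈ coneOf s := by
  rw [coneOf_eq_hull] at hf ⊢
  exact Submodule.sum_mem _ hf

theorem coneOf_subset_coneOf_iff {s t : Finset E} :
    coneOf s ⊆ coneOf t ↔ (s : Set E) ⊆ coneOf t := by
  simp only [coneOf_eq_hull, SetLike.coe_subset_coe, Submodule.span_le]

theorem mem_coneOf_singleton {v x : E} : x ∈ coneOf {v} ↔ ∃ c : ℝ, 0 ≤ c ∧ c • v = x := by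
  rw [coneOf_eq_hull, coe_singleton, SetLike.mem_coe, Submodule.mem_span_singleton]
  exact ⟨fun ⟨c, hc⟩ => ⟨c, c.2, hc⟩, fun ⟨c, hc, hx⟩ => ⟨⟨c, hc⟩, hx⟩⟩

theorem coneOf_empty : coneOf (∅ : Finset E) = {0} := by
  simp [coneOf_eq_hull]

theorem mem_coneOf_of_add_mem {s u : Finset E}
    (hs : LinearIndependent ℝ (fun v : s => (v : E))) (hus : u ⊆ s) {x y : E}
    (hx : x ∈ coneOf s) (hy : y ∈ coneOf s) (hxy : x + y ∈ coneOf u) : x ∈ coneOf u := by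
  obtain ⟨a, ha, rfl⟩ := hx
  obtain ⟨b, hb, rfl⟩ := hy
  obtain ⟨c, -, hc⟩ := hxy
  have hsum : ∑ v ∈ s, (a v + b v - if v ∈ u then c v else 0) • v = 0 := by
    simp only [sub_smul, add_smul, sum_sub_distrib, sum_add_distrib, ite_smul, zero_smul,
      sum_ite_mem, inter_eq_right.mpr hus, ← hc, sub_self]
  have hcoeff := (linearIndepOn_finset_iff (v := id) (s := s)).mp hs _ hsum
  refine ⟨a, ha, (sum_subset hus fun v hvs hvu => ?_).symm⟩
  have := hcoeff v hvs
  rw [if_neg hvu, sub_zero] at this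
  rw [show a v = 0 by linarith [ha v, hb v], zero_smul]

theorem mem_coneOf_of_sum_mem {s u : Finset E}
    (hs : LinearIndependent ℝ (fun v : s => (v : E))) (hus : u ⊆ s) {ι : Type*} [DecidableEq ι]
    {t : Finset ι} {f : ι → E} (hf : ∀ i ∈ t, f i ∈ coneOf s) (hsum : ∑ i ∈ t, f i ∈ coneOf u) :
    ∀ i ∈ t, f i ∈ coneOf u := by
  intro i hi
  rw [← add_sum_erase t f hi] at hsum
  exact mem_coneOf_of_add_mem hs hus (hf i hi)
    (sum_mem_coneOf fun j hj => hf j (mem_of_mem_erase hj)) hsum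

namespace CompleteSimplicialFan

variable (Δ : CompleteSimplicialFan d)

theorem empty_mem : ∅ ∈ Δ.cones := by
  obtain ⟨s, hs, -⟩ := Set.mem_iUnion₂.mp (Δ.complete ▸ Set.mem_univ (0 : E))
  exact Δ.down_closed s hs ∅ (empty_subset s)

theorem exists_pos_smul_mem_of_mem_coneOf {g : Finset E} (hg : g ∈ Δ.cones) {v : E}
    (hv : {v} ∈ Δ.cones) (hvg : v ∈ coneOf g) : ∃ c : ℝ, 0 < c ∧ c • v ∈ g := by
  obtain ⟨⟨u, hug, hu⟩, -⟩ := Δ.inter_face g hg {v} hv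
  rw [Set.inter_eq_right.mpr (coneOf_subset_coneOf_iff.mpr (by simpa using hvg))] at hu
  obtain ⟨w, hw⟩ : u.Nonempty := by
    rw [nonempty_iff_ne_empty]
    rintro rfl
    have hv0 : v ∈ coneOf (∅ : Finset E) := hu ▸ subset_coneOf {v} (mem_singleton_self v)
    rw [coneOf_empty] at hv0
    exact (Δ.indep {v} hv).ne_zero ⟨v, mem_singleton_self v⟩ (Set.mem_singleton_iff.mp hv0)
  obtain ⟨c, hc, rfl⟩ := mem_coneOf_singleton.mp (hu ▸ subset_coneOf u hw)
  refine ⟨c, hc.lt_of_ne ?_, hug hw⟩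
  rintro rfl
  exact (Δ.indep g hg).ne_zero ⟨_, hug hw⟩ (zero_smul ℝ v)

theorem exists_cone_eq_coneOf_of_subset {g : Finset E} (hg : g ∈ Δ.cones) {T : Finset E}
    (hray : ∀ t ∈ T, {t} ∈ Δ.cones) (hTg : (T : Set E) ⊆ coneOf g) :
    ∃ s ∈ Δ.cones, coneOf s = coneOf T := by
  choose! c hc hcg using fun t ht => Δ.exists_pos_smul_mem_of_mem_coneOf hg (hray t ht) (hTg ht)
  refine ⟨T.image fun t => c t • t, Δ.down_closed g hg _ (image_subset_iff.mpr hcg), ?_⟩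
  apply Set.Subset.antisymm <;> rw [coneOf_subset_coneOf_iff]
  · rw [coe_image, Set.image_subset_iff]
    exact fun t ht => smul_mem_coneOf (hc t ht).le (subset_coneOf T ht)
  · intro t ht
    have hct := smul_mem_coneOf (inv_nonneg.mpr (hc t ht).le)
      (subset_coneOf _ (mem_image_of_mem (fun t => c t • t) ht))
    rwa [inv_smul_smul₀ (hc t ht).ne'] at hct

end CompleteSimplicialFan

theorem mem_rayStar_iff {Δ : CompleteSimplicialFan d} {v x : E} :
    x ∈ rayStar Δ v ↔ ∃ s ∈ Δ.cones, v ∈ coneOf s ∧ x ∈ coneOf s := by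
  simp [rayStar, coneOf_subset_coneOf_iff, and_assoc]

namespace LocallyConvexFan

variable {Δ : CompleteSimplicialFan d}

theorem sum_mem_rayStar (hlc : LocallyConvexFan Δ) {v : E} (hv : {v} ∈ Δ.cones) {ι : Type*}
    {t : Finset ι} {f : ι → E} (hf : ∀ i ∈ t, f i ∈ rayStar Δ v) :
    ∑ i ∈ t, f i ∈ rayStar Δ v := by
  have hsmul : ∀ c : ℝ, 0 ≤ c → ∀ x ∈ rayStar Δ v, c • x ∈ rayStar Δ v := by
    intro c hc x hx
    obtain ⟨s, hs, hvs, hxs⟩ := mem_rayStar_iff.mp hx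
    exact mem_rayStar_iff.mpr ⟨s, hs, hvs, smul_mem_coneOf hc hxs⟩
  have hvv : v ∈ coneOf {v} := subset_coneOf _ (mem_singleton_self v)
  refine sum_induction f (· ∈ rayStar Δ v) (fun x y hx hy => ?_) ?_ hf
  · have hmid := hlc v hv hx hy (by norm_num : (0 : ℝ) ≤ 1 / 2) (by norm_num : (0 : ℝ) ≤ 1 / 2)
      (by norm_num)
    convert hsmul 2 zero_le_two _ hmid using 1
    module
  · simpa using hsmul 0 le_rfl v (mem_rayStar_iff.mpr ⟨{v}, hv, hvv, hvv⟩)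

theorem exists_cone_superset_insert (hlc : LocallyConvexFan Δ) {a : E} (ha : {a} ∈ Δ.cones)
    {T : Finset E} (hpair : ∀ t ∈ T, ∃ p ∈ Δ.cones, coneOf p = coneOf {a, t})
    (hT : ∃ s ∈ Δ.cones, coneOf s = coneOf T) :
    ∃ g ∈ Δ.cones, ((insert a T : Finset E) : Set E) ⊆ coneOf g := by
  obtain ⟨s, hs, hsT⟩ := hT
  have hTs : ∀ t ∈ T, t ∈ coneOf s := fun t ht => hsT ▸ subset_coneOf T ht
  have hTstar : ∀ t ∈ T, t ∈ rayStar Δ a := by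
    intro t ht
    obtain ⟨p, hp, hpat⟩ := hpair t ht
    exact mem_rayStar_iff.mpr ⟨p, hp, hpat ▸ subset_coneOf _ (mem_insert_self a {t}),
      hpat ▸ subset_coneOf _ (mem_insert_of_mem (mem_singleton_self t))⟩
  obtain ⟨g, hg, hag, hTg⟩ := mem_rayStar_iff.mp (hlc.sum_mem_rayStar ha hTstar)
  obtain ⟨⟨u, hus, hu⟩, -⟩ := Δ.inter_face s hs g hg
  have hTu : ∀ t ∈ T, t ∈ coneOf u :=
    mem_coneOf_of_sum_mem (Δ.indep s hs) hus hTs (hu ▸ ⟨sum_mem_coneOf hTs, hTg⟩)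
  rw [coe_insert]
  exact ⟨g, hg, Set.insert_subset hag fun t ht => (hu ▸ hTu t ht).2⟩

theorem exists_cone_eq_coneOf (hlc : LocallyConvexFan Δ) (T : Finset E)
    (hray : ∀ t ∈ T, {t} ∈ Δ.cones)
    (hpair : ∀ t ∈ T, ∀ t' ∈ T, t ≠ t' → ∃ p ∈ Δ.cones, coneOf p = coneOf {t, t'}) :
    ∃ s ∈ Δ.cones, coneOf s = coneOf T := by
  induction T using Finset.induction_on with
  | empty => exact ⟨∅, Δ.empty_mem, rfl⟩
  | insert a T haT ih =>
    have hT := ih (fun t ht => hray t (mem_insert_of_mem ht))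
      fun t ht t' ht' => hpair t (mem_insert_of_mem ht) t' (mem_insert_of_mem ht')
    obtain ⟨g, hg, hTg⟩ := hlc.exists_cone_superset_insert (hray a (mem_insert_self a T))
      (fun t ht => hpair a (mem_insert_self a T) t (mem_insert_of_mem ht)
        (ne_of_mem_of_not_mem ht haT).symm) hT
    exact Δ.exists_cone_eq_coneOf_of_subset hg hray hTg

end LocallyConvexFan

end

theorem locallyConvex_fan_is_flag_general {d : ℕ} (Δ : CompleteSimplicialFan d)
    (hlc : LocallyConvexFan Δ)
    (k : ℕ) (v : Fin k → EuclideanSpace ℝ (Fin d))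
    (hray : ∀ i, {v i} ∈ Δ.cones)
    (hpair : ∀ i j, i ≠ j → ∃ s ∈ Δ.cones, coneOf s = coneOf {v i, v j}) :
    ∃ s ∈ Δ.cones, coneOf s = coneOf (Finset.image v Finset.univ) := by
  refine hlc.exists_cone_eq_coneOf _ (by simpa using hray) ?_
  simp only [Finset.mem_image, Finset.mem_univ, true_and]
  rintro _ ⟨i, rfl⟩ _ ⟨j, rfl⟩ hij
  exact hpair i j (ne_of_apply_ne v hij)

/-- A locally convex complete simplicial fan is flag: if rays `ρ_1, …, ρ_k`
(spanned by `v 1, …, v k`) pairwise span two-dimensional cones of `Δ`, then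
their nonnegative span is a cone of `Δ`. -/
theorem locallyConvex_fan_is_flag {d : ℕ} (Δ : CompleteSimplicialFan d)
    (hlc : LocallyConvexFan Δ)
    (k : ℕ) (v : Fin k → EuclideanSpace ℝ (Fin d))
    (hray : ∀ i, {v i} ∈ Δ.cones)
    (hdist : ∀ i j, i ≠ j → coneOf {v i} ≠ coneOf {v j})
    (hpair : ∀ i j, i ≠ j → ∃ s ∈ Δ.cones, coneOf s = coneOf {v i, v j}) :
    ∃ s ∈ Δ.cones, coneOf s = coneOf (Finset.image v Finset.univ) :=
  locallyConvex_fan_is_flag_general Δ hlc k v hray hpair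
end
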